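/- For every k ≥ 1, every predicate φ : Point → Prop, and every point p: ((Y∘E_H^{acc})^k φ) p holds if and only if φ q holds for every point q that is (H-Y-acc)-reachable in k steps from p. -/

import Mathlib

/-- The simple modal operator induced by the relation `Y`. -/
def Yop {Point : Type*} (Y : Point → Point → Prop) (φ : Point → Prop) (p : Point) : Prop :=
  ∀ q, Y p q → φ q

/-- `acc`-guarded belief of agent `i` relative to the indexical set `H`:
`(B_i^{H,acc} φ) p := ∀ q, q ∼_i p → i ∈ H q → acc q → φ q`. -/
def BopAcc {Point Agent : Type*} (H : Point → Set Agent) (acc : Point → Prop)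
    (sim : Agent → Point → Point → Prop)
    (i : Agent) (φ : Point → Prop) (p : Point) : Prop :=
  ∀ q, sim i q p → i ∈ H q → acc q → φ q

/-- `(E_H^{acc} φ) p := ∀ i ∈ H p, (B_i^{H,acc} φ) p`. -/
def EopAcc {Point Agent : Type*} (H : Point → Set Agent) (acc : Point → Prop)
    (sim : Agent → Point → Point → Prop) (φ : Point → Prop) (p : Point) : Prop :=
  ∀ i ∈ H p, BopAcc H acc sim i φ p

/-- `(Y∘E_H^{acc})^n`, with `(Y∘E_H^{acc})^0 = id` and
`(Y∘E_H^{acc})^{n+1} φ = Y (E_H^{acc} ((Y∘E_H^{acc})^n φ))`. -/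
def YEiterAcc {Point Agent : Type*} (H : Point → Set Agent) (acc : Point → Prop)
    (sim : Agent → Point → Point → Prop)
    (Y : Point → Point → Prop) : ℕ → (Point → Prop) → (Point → Prop)
  | 0, φ => φ
  | n + 1, φ => Yop Y (EopAcc H acc sim (YEiterAcc H acc sim Y n φ))

/-- `acc`-relative indexical common knowledge:
`(C_H^{Y,acc} φ) p := ∀ n ≥ 1, ((Y∘E_H^{acc})^n φ) p`. -/
def CopAcc {Point Agent : Type*} (H : Point → Set Agent) (acc : Point → Prop)
    (sim : Agent → Point → Point → Prop)
    (Y : Point → Point → Prop) (φ : Point → Prop) (p : Point) : Prop :=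
  ∀ n, 1 ≤ n → YEiterAcc H acc sim Y n φ p

/-- A single `(H-Y-acc)`-reachability step: there are an agent `i` and a point `p'`
with `Y p p'`, `i ∈ H p'`, `i ∈ H q`, `acc q`, and `q ∼_i p'`. -/
def StepAcc {Point Agent : Type*} (H : Point → Set Agent) (acc : Point → Prop)
    (sim : Agent → Point → Point → Prop)
    (Y : Point → Point → Prop) (p q : Point) : Prop :=
  ∃ (i : Agent) (p' : Point), Y p p' ∧ i ∈ H p' ∧ i ∈ H q ∧ acc q ∧ sim i q p'

/-- `q` is `(H-Y-acc)`-reachable from `p` in `k` steps. -/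
def ReachNAcc {Point Agent : Type*} (H : Point → Set Agent) (acc : Point → Prop)
    (sim : Agent → Point → Point → Prop)
    (Y : Point → Point → Prop) : ℕ → Point → Point → Prop
  | 0, p, q => p = q
  | k + 1, p, q => ∃ mid, StepAcc H acc sim Y p mid ∧ ReachNAcc H acc sim Y k mid q

section

variable {Point Agent : Type*} (H : Point → Set Agent) (acc : Point → Prop)
  (sim : Agent → Point → Point → Prop) (Y : Point → Point → Prop)

theorem yop_eopAcc_iff_forall_stepAcc (ψ : Point → Prop) (p : Point) :
    Yop Y (EopAcc H acc sim ψ) p ↔ ∀ q, StepAcc H acc sim Y p q → ψ q := by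
  constructor
  · rintro h q ⟨i, p', hY, hip', hiq, hacc, hsim⟩
    exact h p' hY i hip' q hsim hiq hacc
  · intro h p' hY i hip' q hsim hiq hacc
    exact h q ⟨i, p', hY, hip', hiq, hacc, hsim⟩

theorem yEiterAcc_iff_forall_reachNAcc (k : ℕ) (φ : Point → Prop) (p : Point) :
    YEiterAcc H acc sim Y k φ p ↔ ∀ q, ReachNAcc H acc sim Y k p q → φ q := by
  induction k generalizing p with
  | zero => exact ⟨fun h q hpq => hpq ▸ h, fun h => h p rfl⟩
  | succ n ih =>
    simp only [YEiterAcc, ReachNAcc, yop_eopAcc_iff_forall_stepAcc, ih]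
    exact ⟨fun h q ⟨mid, hstep, hreach⟩ => h mid hstep q hreach,
      fun h mid hstep q hreach => h q ⟨mid, hstep, hreach⟩⟩

end

/-- `((Y∘E_H^{acc})^k φ) p` holds iff `φ q` holds for every point `q` that is
`(H-Y-acc)`-reachable in `k` steps from `p`, for every `k ≥ 1`. -/
theorem iterAcc_iff_reach {Point Agent : Type*} (H : Point → Set Agent)
    (acc : Point → Prop) (sim : Agent → Point → Point → Prop)
    (Y : Point → Point → Prop) :
    ∀ k, 1 ≤ k → ∀ (φ : Point → Prop) (p : Point),
      YEiterAcc H acc sim Y k φ p ↔ ∀ q, ReachNAcc H acc sim Y k p q → φ q :=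
  fun k _ => yEiterAcc_iff_forall_reachNAcc H acc sim Y k
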